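/- Let Φ denote the standard normal CDF, H ∈ (0,1/2), θ > 0, c = 2H√θ/σ_H for some σ_H > 0, and ν(z) = (c/(2H))·√T·((1 + z/(c√T))^{-2H} - 1) for z > -c√T. Then there exists C > 0 such that for all sufficiently large T, sup_{z > -c√T} |Φ(ν(z)) - Φ(-z)| ≤ C/√T. Equivalently, with Φ̄(x) = 1 - Φ(x), sup_{z > -c√T} |Φ̄(ν(z)) - Φ(z)| ≤ C/√T. -/

import Mathlib

open MeasureTheory Real Set Filter

noncomputable def stdNormalCDF (x : ℝ) : ℝ :=
  (∫ y in Set.Iic x, Real.exp (-y ^ 2 / 2)) / Real.sqrt (2 * Real.pi)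

/-!
Write `s = c √T`, `q = 2H` and `u = z / s > -1`, so that `ν(z) = (s/q)((1 + u)^(-q) - 1)`.
Bernoulli's inequality gives `-z ≤ ν(z)`, hence `|Φ(ν(z)) - Φ(-z)|` is at most the Gaussian
mass between `-z` and `ν(z)`. For `|u| ≤ 1/4` the second-order Bernoulli bound gives
`ν(z) + z ≤ 2z²/s`, and that interval stays at distance `|z|/2` from the origin, so the mass is
at most `(2z²/s) e^(-z²/8) ≤ 16/s`. For `u < -1/4` the interval lies beyond `s/4`, and for
`u > 1/4` below `-(1 - (5/4)^(-q)) s/q`; in both cases the Mills-ratio bound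
`∫_m^∞ e^(-y²/2) dy ≤ 1/m` makes the mass `O(1/s)`.
-/

lemma integrable_exp_neg_sq_div_two : Integrable fun y : ℝ => exp (-y ^ 2 / 2) := by
  simpa [neg_div, div_eq_inv_mul] using integrable_exp_neg_mul_sq (b := (2 : ℝ)⁻¹) (by norm_num)

lemma abs_stdNormalCDF_sub_le_integral {a b : ℝ} (hab : a ≤ b) :
    |stdNormalCDF b - stdNormalCDF a| ≤ ∫ y in Ioc a b, exp (-y ^ 2 / 2) := by
  have hI : 0 ≤ ∫ y in Ioc a b, exp (-y ^ 2 / 2) :=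
    setIntegral_nonneg measurableSet_Ioc fun y _ => (exp_pos _).le
  have h2π : 1 ≤ √(2 * π) := one_le_sqrt.2 (by linarith [pi_gt_three])
  rw [stdNormalCDF, stdNormalCDF, div_sub_div_same,
    intervalIntegral.integral_Iic_sub_Iic integrable_exp_neg_sq_div_two.integrableOn
      integrable_exp_neg_sq_div_two.integrableOn, intervalIntegral.integral_of_le hab,
    abs_of_nonneg (div_nonneg hI (sqrt_nonneg _))]
  exact div_le_self hI h2π

lemma abs_stdNormalCDF_sub_le_mul {a b D : ℝ} (hab : a ≤ b)
    (hD : ∀ y ∈ Ioc a b, exp (-y ^ 2 / 2) ≤ D) :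
    |stdNormalCDF b - stdNormalCDF a| ≤ (b - a) * D := by
  have h := norm_setIntegral_le_of_norm_le_const (μ := volume) (f := fun y => exp (-y ^ 2 / 2))
    measure_Ioc_lt_top fun y hy => by rw [norm_of_nonneg (exp_pos _).le]; exact hD y hy
  rw [Real.volume_real_Ioc_of_le hab, norm_eq_abs] at h
  linarith [abs_stdNormalCDF_sub_le_integral hab, le_abs_self (∫ y in Ioc a b, exp (-y ^ 2 / 2))]

lemma abs_stdNormalCDF_sub_le_mul_exp {a b : ℝ} (hab : a ≤ b) (hba : b - a ≤ |a| / 2) :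
    |stdNormalCDF b - stdNormalCDF a| ≤ (b - a) * exp (-a ^ 2 / 8) := by
  refine abs_stdNormalCDF_sub_le_mul hab fun y hy => exp_le_exp.2 ?_
  have hy : |a| / 2 ≤ |y| := by
    rcases abs_cases a with ⟨ha, ha'⟩ | ⟨ha, ha'⟩ <;>
      rcases abs_cases y with ⟨hy', hy''⟩ | ⟨hy', hy''⟩ <;> linarith [hy.1, hy.2]
  nlinarith [sq_abs a, sq_abs y, abs_nonneg a]

lemma setIntegral_exp_neg_sq_div_two_Ioi_le {m : ℝ} (hm : 0 < m) :
    ∫ y in Ioi m, exp (-y ^ 2 / 2) ≤ m⁻¹ := by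
  have hle : ∀ y, exp (-y ^ 2 / 2) ≤ exp (m ^ 2 / 2) * exp (-m * y) := fun y => by
    rw [← exp_add]; exact exp_le_exp.2 (by nlinarith [sq_nonneg (y - m)])
  calc ∫ y in Ioi m, exp (-y ^ 2 / 2)
      ≤ ∫ y in Ioi m, exp (m ^ 2 / 2) * exp (-m * y) :=
        setIntegral_mono_on integrable_exp_neg_sq_div_two.integrableOn
          ((exp_neg_integrableOn_Ioi m hm).const_mul _) measurableSet_Ioi fun y _ => hle y
    _ = exp (-(m ^ 2 / 2)) * m⁻¹ := by
        rw [integral_const_mul, integral_exp_mul_Ioi (neg_lt_zero.2 hm), neg_div_neg_eq,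
          mul_div_assoc', ← exp_add, div_eq_mul_inv]
        ring_nf
    _ ≤ m⁻¹ := mul_le_of_le_one_left (inv_nonneg.2 hm.le) (exp_le_one_iff.2 (by nlinarith))

lemma abs_stdNormalCDF_sub_le_inv_of_le {m a b : ℝ} (hm : 0 < m) (hma : m ≤ a) (hab : a ≤ b) :
    |stdNormalCDF b - stdNormalCDF a| ≤ m⁻¹ := by
  refine (abs_stdNormalCDF_sub_le_integral hab).trans
    ((setIntegral_mono_set integrable_exp_neg_sq_div_two.integrableOn
      (Eventually.of_forall fun y => (exp_pos _).le) ?_).trans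
      (setIntegral_exp_neg_sq_div_two_Ioi_le hm))
  exact (Ioc_subset_Ioi_self.trans (Ioi_subset_Ioi hma)).eventuallyLE

lemma abs_stdNormalCDF_sub_le_inv_of_le_neg {m a b : ℝ} (hm : 0 < m) (hab : a ≤ b)
    (hbm : b ≤ -m) : |stdNormalCDF b - stdNormalCDF a| ≤ m⁻¹ := by
  have hsymm := integral_comp_neg_Ioi m fun y => exp (-y ^ 2 / 2)
  simp only [neg_sq] at hsymm
  calc |stdNormalCDF b - stdNormalCDF a|
      ≤ ∫ y in Ioc a b, exp (-y ^ 2 / 2) := abs_stdNormalCDF_sub_le_integral hab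
    _ ≤ ∫ y in Iic (-m), exp (-y ^ 2 / 2) :=
        setIntegral_mono_set integrable_exp_neg_sq_div_two.integrableOn
          (Eventually.of_forall fun y => (exp_pos _).le)
          (LE.le.eventuallyLE fun y hy => hy.2.trans hbm)
    _ ≤ m⁻¹ := hsymm ▸ setIntegral_exp_neg_sq_div_two_Ioi_le hm

section Bernoulli

variable {u q : ℝ}

lemma one_sub_mul_le_one_add_rpow_neg (hu : -1 < u) (hq0 : 0 ≤ q) (hq1 : q ≤ 1) :
    1 - q * u ≤ (1 + u) ^ (-q) := by
  have h1u : 0 < 1 + u := by linarith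
  have hp : 0 < (1 + u) ^ q := rpow_pos_of_pos h1u q
  have hbern : (1 + u) ^ q ≤ 1 + q * u := rpow_one_add_le_one_add_mul_self hu.le hq0 hq1
  rw [rpow_neg h1u.le, ← one_div, le_div_iff₀ hp]
  rcases le_or_gt 0 (1 - q * u) with h | h
  · nlinarith [mul_le_mul_of_nonneg_left hbern h, sq_nonneg (q * u)]
  · nlinarith

lemma one_add_rpow_neg_le (hu : -(1 / 2) ≤ u) (hq0 : 0 ≤ q) (hq1 : q ≤ 1) :
    (1 + u) ^ (-q) ≤ 1 - q * u + 2 * q * u ^ 2 := by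
  have h1u : 0 < 1 + u := by linarith
  -- `(1 + u) ^ (-q) = ((1 + u)⁻¹) ^ q`, and `x ↦ x ^ q` is concave
  have hbern : ((1 + u)⁻¹) ^ q ≤ 1 + q * ((1 + u)⁻¹ - 1) := by
    simpa using rpow_one_add_le_one_add_mul_self (s := (1 + u)⁻¹ - 1)
      (by linarith [inv_nonneg.2 h1u.le]) hq0 hq1
  have hinv : (1 + u)⁻¹ ≤ 1 - u + 2 * u ^ 2 :=
    (inv_le_iff_one_le_mul₀ h1u).2 (by nlinarith [sq_nonneg u])
  rw [rpow_neg h1u.le, ← inv_rpow h1u.le]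
  nlinarith [mul_le_mul_of_nonneg_left hinv hq0]

end Bernoulli

/-- The paper's `ν(z)`, with `q = 2H` and `s = c √T`. -/
noncomputable def powerShift (q s z : ℝ) : ℝ := s / q * ((1 + z / s) ^ (-q) - 1)

section PowerShift

variable {q s z : ℝ}

lemma powerShift_le_of_rpow_le (hq : 0 < q) (hs : 0 < s) {A : ℝ}
    (h : (1 + z / s) ^ (-q) ≤ A) : powerShift q s z ≤ s / q * (A - 1) :=
  mul_le_mul_of_nonneg_left (by linarith) (div_pos hs hq).le

lemma neg_le_powerShift (hq0 : 0 < q) (hq1 : q ≤ 1) (hs : 0 < s) (hz : -s < z) :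
    -z ≤ powerShift q s z := by
  have hu : -1 < z / s := by rw [lt_div_iff₀ hs]; linarith
  have h := mul_le_mul_of_nonneg_left
    (sub_le_sub_right (one_sub_mul_le_one_add_rpow_neg hu hq0.le hq1) 1) (div_pos hs hq0).le
  calc -z = s / q * (1 - q * (z / s) - 1) := by field_simp; ring
    _ ≤ powerShift q s z := h

lemma powerShift_le_neg_add_sq (hq0 : 0 < q) (hq1 : q ≤ 1) (hs : 0 < s) (hz : -(s / 2) ≤ z) :
    powerShift q s z ≤ -z + 2 * z ^ 2 / s := by
  have hu : -(1 / 2) ≤ z / s := by rw [le_div_iff₀ hs]; linarith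
  calc powerShift q s z ≤ s / q * (1 - q * (z / s) + 2 * q * (z / s) ^ 2 - 1) :=
        powerShift_le_of_rpow_le hq0 hs (one_add_rpow_neg_le hu hq0.le hq1)
    _ = -z + 2 * z ^ 2 / s := by field_simp; ring

lemma powerShift_le_of_quarter_le (hq : 0 < q) (hs : 0 < s) (hz : s / 4 ≤ z) :
    powerShift q s z ≤ -(s / q * (1 - (5 / 4 : ℝ) ^ (-q))) := by
  have hu : 1 / 4 ≤ z / s := by rw [le_div_iff₀ hs]; linarith
  calc powerShift q s z ≤ s / q * ((5 / 4 : ℝ) ^ (-q) - 1) :=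
        powerShift_le_of_rpow_le hq hs
          (rpow_le_rpow_of_nonpos (by norm_num) (by linarith) (by linarith))
    _ = -(s / q * (1 - (5 / 4 : ℝ) ^ (-q))) := by ring

end PowerShift

lemma sq_mul_exp_neg_sq_div_eight_le (x : ℝ) : x ^ 2 * exp (-x ^ 2 / 8) ≤ 8 := by
  have h := add_one_le_exp (x ^ 2 / 8)
  rw [neg_div, exp_neg, ← div_eq_mul_inv, div_le_iff₀ (exp_pos _)]
  nlinarith [sq_nonneg x]

theorem abs_stdNormalCDF_powerShift_sub_le {q s z : ℝ} (hq0 : 0 < q) (hq1 : q ≤ 1) (hs : 0 < s)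
    (hz : -s < z) :
    |stdNormalCDF (powerShift q s z) - stdNormalCDF (-z)|
      ≤ (16 + q / (1 - (5 / 4 : ℝ) ^ (-q))) / s := by
  set δ := 1 - (5 / 4 : ℝ) ^ (-q)
  have hδ : 0 < δ := sub_pos.2 (rpow_lt_one_of_one_lt_of_neg (by norm_num) (by linarith))
  have hK : ∀ K ≤ 16 + q / δ, K / s ≤ (16 + q / δ) / s := fun _ h =>
    div_le_div_of_nonneg_right h hs.le
  have hqδ : 0 ≤ q / δ := (div_pos hq0 hδ).le
  have hlow := neg_le_powerShift hq0 hq1 hs hz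
  rcases lt_or_ge z (-(s / 4)) with hzl | hzl
  · calc _ ≤ (s / 4)⁻¹ := abs_stdNormalCDF_sub_le_inv_of_le (by positivity) (by linarith) hlow
      _ = 4 / s := inv_div _ _
      _ ≤ _ := hK 4 (by linarith)
  rcases le_or_gt z (s / 4) with hzu | hzu
  · have hup := powerShift_le_neg_add_sq (z := z) hq0 hq1 hs (by linarith)
    have hsq : 2 * z ^ 2 / s ≤ |-z| / 2 := by
      rw [abs_neg, div_le_iff₀ hs, ← sq_abs z]
      nlinarith [abs_le.2 ⟨hzl, hzu⟩, abs_nonneg z]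
    calc _ ≤ (powerShift q s z - -z) * exp (-(-z) ^ 2 / 8) :=
          abs_stdNormalCDF_sub_le_mul_exp hlow (by linarith)
      _ ≤ 2 * z ^ 2 / s * exp (-z ^ 2 / 8) := by
          rw [neg_sq]; exact mul_le_mul_of_nonneg_right (by linarith) (exp_pos _).le
      _ ≤ 16 / s := by
          rw [div_mul_eq_mul_div, mul_assoc]
          exact div_le_div_of_nonneg_right (by linarith [sq_mul_exp_neg_sq_div_eight_le z]) hs.le
      _ ≤ _ := hK 16 (by linarith)
  · calc _ ≤ (s / q * δ)⁻¹ :=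
          abs_stdNormalCDF_sub_le_inv_of_le_neg (by positivity) hlow
            (powerShift_le_of_quarter_le hq0 hs hzu.le)
      _ = q / δ / s := by field_simp
      _ ≤ _ := hK _ (by linarith)

theorem stmt17 (H θ σH : ℝ) (hH : H ∈ Set.Ioo (0:ℝ) (1/2)) (hθ : 0 < θ)
    (hσ : 0 < σH) :
    ∃ C > (0:ℝ), ∃ T₀ : ℝ, ∀ T ≥ T₀, ∀ z : ℝ,
      -(2 * H * Real.sqrt θ / σH) * Real.sqrt T < z →
      |stdNormalCDF
          ((2 * H * Real.sqrt θ / σH) / (2 * H) * Real.sqrt T *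
            ((1 + z / ((2 * H * Real.sqrt θ / σH) * Real.sqrt T)) ^ (-(2 * H)) - 1))
        - stdNormalCDF (-z)| ≤ C / Real.sqrt T := by
  obtain ⟨hH0, hH1⟩ := hH
  set c := 2 * H * √θ / σH
  have hc : 0 < c := by positivity
  set q := 2 * H
  have hq0 : 0 < q := by positivity
  have hδ : 0 < 1 - (5 / 4 : ℝ) ^ (-q) :=
    sub_pos.2 (rpow_lt_one_of_one_lt_of_neg (by norm_num) (by linarith))
  refine ⟨(16 + q / (1 - (5 / 4 : ℝ) ^ (-q))) / c, by positivity, 1, fun T hT z hz => ?_⟩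
  have hs : 0 < c * √T := mul_pos hc (sqrt_pos.2 (by linarith))
  rw [show c / q * √T = c * √T / q by ring, div_div]
  exact abs_stdNormalCDF_powerShift_sub_le hq0 (by linarith) hs (by linarith)
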